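/- arXiv:0912.4010 — 6 statements merged into one kernel-verified Lean document; each statement's English description precedes it below -/
import Mathlib

section
/- In the braid group B_{M+1} with generators σ_1,...,σ_M, the elements y_1 = 1 and y_{k+1} = σ_k y_k σ_k (so y_{k+1} = σ_k σ_{k-1} ⋯ σ_1 σ_1 ⋯ σ_{k-1} σ_k) pairwise commute: y_i y_j = y_j y_i for all i, j. -/
/-- In the braid group `B_{M+1}` with generators `σ 1, ..., σ M` satisfying the braid and
locality relations, the Jucys–Murphy elements defined by `y 1 = 1`, `y (k+1) = σ k * y k * σ k`
pairwise commute. -/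
theorem braid_jucys_murphy_commute
    (G : Type*) [Group G] (M : ℕ) (σ : ℕ → G) (y : ℕ → G)
    (hbraid : ∀ i, 1 ≤ i → i + 1 ≤ M →
      σ i * σ (i + 1) * σ i = σ (i + 1) * σ i * σ (i + 1))
    (hloc : ∀ i j, 1 ≤ i → i + 1 < j → j ≤ M → σ i * σ j = σ j * σ i)
    (hy1 : y 1 = 1)
    (hyrec : ∀ k, 1 ≤ k → k ≤ M → y (k + 1) = σ k * y k * σ k) :
    ∀ i j, 1 ≤ i → i ≤ M + 1 → 1 ≤ j → j ≤ M + 1 → y i * y j = y j * y i := by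
  -- `y i` commutes with `σ j` whenever `i < j ≤ M`.
  have hcomm : ∀ i j, 1 ≤ i → i < j → j ≤ M → y i * σ j = σ j * y i := by
    intro i
    induction i with
    | zero => intro j h; omega
    | succ n ih =>
      intro j h1 hij hjM
      by_cases hn : n = 0
      · subst hn; rw [hy1, one_mul, mul_one]
      · have hn1 : 1 ≤ n := Nat.one_le_iff_ne_zero.mpr hn
        have hnM : n ≤ M := by omega
        have hnj : n < j := by omega
        have hsc : σ n * σ j = σ j * σ n := hloc n j hn1 (by omega) hjM
        have hyc : y n * σ j = σ j * y n := ih j hn1 hnj hjM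
        rw [hyrec n hn1 hnM]
        calc σ n * y n * σ n * σ j = σ n * y n * (σ n * σ j) := by group
          _ = σ n * y n * (σ j * σ n) := by rw [hsc]
          _ = σ n * (y n * σ j) * σ n := by group
          _ = σ n * (σ j * y n) * σ n := by rw [hyc]
          _ = σ n * σ j * (y n * σ n) := by group
          _ = σ j * σ n * (y n * σ n) := by rw [hsc]
          _ = σ j * (σ n * y n * σ n) := by group
  -- key lemma: `y k` commutes with `y (k+1)`.
  have hkey : ∀ k, 1 ≤ k → k ≤ M → y k * y (k + 1) = y (k + 1) * y k := by
    intro k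
    induction k with
    | zero => intro h; omega
    | succ n ih =>
      intro _ hkM
      by_cases hn : n = 0
      · subst hn
        rw [hy1, one_mul, mul_one]
      · have hn1 : 1 ≤ n := Nat.one_le_iff_ne_zero.mpr hn
        have hnM : n ≤ M := by omega
        have hIH0 : y n * y (n + 1) = y (n + 1) * y n := ih hn1 hnM
        rw [hyrec n hn1 hnM] at hIH0
        rw [hyrec (n + 1) (by omega) hkM, hyrec n hn1 hnM]
        set a := y n with ha
        set s := σ n with hs
        set s' := σ (n + 1) with hs'
        have hb : s * s' * s = s' * s * s' := hbraid n hn1 hkM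
        have hc : a * s' = s' * a := hcomm n (n + 1) hn1 (by omega) hkM
        have hb1 : ∀ x : G, s * (s' * (s * x)) = s' * (s * (s' * x)) := by
          intro x
          calc s * (s' * (s * x)) = (s * s' * s) * x := by group
            _ = (s' * s * s') * x := by rw [hb]
            _ = s' * (s * (s' * x)) := by group
        have hc1 : ∀ x : G, a * (s' * x) = s' * (a * x) := by
          intro x
          calc a * (s' * x) = (a * s') * x := by group
            _ = (s' * a) * x := by rw [hc]
            _ = s' * (a * x) := by group
        have hb2 : s' * (s * s') = s * (s' * s) := by
          calc s' * (s * s') = s' * s * s' := by group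
            _ = s * s' * s := hb.symm
            _ = s * (s' * s) := by group
        have hIH1 : ∀ x : G, a * (s * (a * (s * x))) = s * (a * (s * (a * x))) := by
          intro x
          calc a * (s * (a * (s * x))) = (a * (s * a * s)) * x := by group
            _ = ((s * a * s) * a) * x := by rw [hIH0]
            _ = s * (a * (s * (a * x))) := by group
        show s * a * s * (s' * (s * a * s) * s') = s' * (s * a * s) * s' * (s * a * s)
        simp only [mul_assoc]
        -- LHS : s (a (s (s' (s (a (s s'))))))
        -- RHS : s' (s (a (s (s' (s (a s))))))
        conv_lhs => rw [hb1, ← hc1, hb2, hc1, hIH1]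
        conv_rhs => rw [hb1, hc1, ← hb1, ← hc1]
  -- commutation for ordered pairs
  have haux : ∀ j i, 1 ≤ i → i ≤ j → j ≤ M + 1 → y i * y j = y j * y i := by
    intro j
    induction j with
    | zero => intro i h1 h2; omega
    | succ n ih =>
      intro i hi1 hij hjM
      rcases eq_or_lt_of_le hij with h | h
      · rw [h]
      · have hn1 : 1 ≤ n := by omega
        have hnM : n ≤ M := by omega
        rcases eq_or_lt_of_le (Nat.lt_succ_iff.mp h) with h' | h'
        · rw [h']; exact hkey n hn1 hnM
        · -- i < n
          have hys : y i * σ n = σ n * y i := hcomm i n hi1 h' hnM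
          have hyy : y i * y n = y n * y i := ih i hi1 (by omega) (by omega)
          rw [hyrec n hn1 hnM]
          calc y i * (σ n * y n * σ n) = (y i * σ n) * y n * σ n := by group
            _ = (σ n * y i) * y n * σ n := by rw [hys]
            _ = σ n * (y i * y n) * σ n := by group
            _ = σ n * (y n * y i) * σ n := by rw [hyy]
            _ = σ n * y n * (y i * σ n) := by group
            _ = σ n * y n * (σ n * y i) := by rw [hys]
            _ = σ n * y n * σ n * y i := by group
  intro i j hi1 hiM hj1 hjM
  rcases le_total i j with h | h
  · exact haux j i hi1 h hjM
  · exact (haux i j hj1 h hiM).symm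
end

section
/- In an associative algebra over a field, suppose σ satisfies the cubic relation (σ − q)(σ + q^{-1})(σ − ν) = 0 with q − q^{-1} ≠ 0 and ν ≠ 0, and define κ = (q − σ)(σ + q^{-1})/(ν(q − q^{-1})). Then κ^2 = μ κ where μ = 1 + (ν^{-1} − ν)/(q − q^{-1}). -/
/-! Put `P = (q - σ)(σ + q⁻¹)`, so that `κ` is a scalar multiple of `P`. The cubic relation says
`P (σ - ν) = 0`, i.e. right multiplication by `σ` acts on `P` as the scalar `ν`. Hence
`P² = P (q - σ)(σ + q⁻¹) = (q - ν)(ν + q⁻¹) P`, and dividing by `ν (q - q⁻¹)` turns this into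
`κ² = μ κ`. -/

section RightEigen

variable {R A : Type*} [CommRing R] [Ring A] [Algebra R A] {P σ : A} {ν : R}

theorem mul_eq_smul_of_mul_sub_smul_one_eq_zero (h : P * (σ - ν • (1 : A)) = 0) :
    P * σ = ν • P := by
  rwa [mul_sub, mul_smul_comm, mul_one, sub_eq_zero] at h

theorem mul_smul_one_sub_of_mul_eq_smul (h : P * σ = ν • P) (a : R) :
    P * (a • (1 : A) - σ) = (a - ν) • P := by
  rw [mul_sub, mul_smul_comm, mul_one, h, sub_smul]

theorem mul_add_smul_one_of_mul_eq_smul (h : P * σ = ν • P) (b : R) :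
    P * (σ + b • (1 : A)) = (ν + b) • P := by
  rw [mul_add, mul_smul_comm, mul_one, h, add_smul]

theorem mul_self_eq_smul_of_cubic {a b : R}
    (hcubic : (σ - a • (1 : A)) * (σ + b • (1 : A)) * (σ - ν • (1 : A)) = 0) :
    ((a • (1 : A) - σ) * (σ + b • (1 : A))) * ((a • (1 : A) - σ) * (σ + b • (1 : A))) =
      ((a - ν) * (ν + b)) • ((a • (1 : A) - σ) * (σ + b • (1 : A))) := by
  set P := (a • (1 : A) - σ) * (σ + b • (1 : A)) with hP
  have hPσ : P * σ = ν • P := by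
    apply mul_eq_smul_of_mul_sub_smul_one_eq_zero
    rw [hP, ← neg_sub σ, neg_mul, neg_mul, hcubic, neg_zero]
  calc P * P = P * (a • (1 : A) - σ) * (σ + b • (1 : A)) := (mul_assoc _ _ _).symm
    _ = ((a - ν) * (ν + b)) • P := by
      rw [mul_smul_one_sub_of_mul_eq_smul hPσ, smul_mul_assoc,
        mul_add_smul_one_of_mul_eq_smul hPσ, smul_smul]

end RightEigen

theorem bmw_scalar_identity {F : Type*} [Field F] {q ν : F} (hq : q ≠ 0) (hq2 : q ^ 2 ≠ 1)
    (hν : ν ≠ 0) :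
    (ν * (q - q⁻¹))⁻¹ * ((q - ν) * (ν + q⁻¹)) = 1 + (ν⁻¹ - ν) / (q - q⁻¹) := by
  have : q ^ 2 - 1 ≠ 0 := sub_ne_zero.mpr hq2
  field_simp
  ring

/-- If `σ` satisfies the BMW cubic relation `(σ - q)(σ + q⁻¹)(σ - ν) = 0` with
`q - q⁻¹ ≠ 0` and `ν ≠ 0`, and `κ = (q - σ)(σ + q⁻¹)/(ν(q - q⁻¹))`, then
`κ² = μ κ` where `μ = 1 + (ν⁻¹ - ν)/(q - q⁻¹)`. -/
theorem bmw_kappa_sq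
    (F : Type*) [Field F] (A : Type*) [Ring A] [Algebra F A]
    (q ν : F) (hq : q ≠ 0) (hq2 : q ^ 2 ≠ 1) (hν : ν ≠ 0)
    (σ : A)
    (hcubic : (σ - q • (1 : A)) * (σ + q⁻¹ • (1 : A)) * (σ - ν • (1 : A)) = 0)
    (κ : A)
    (hκ : κ = (ν * (q - q⁻¹))⁻¹ • ((q • (1 : A) - σ) * (σ + q⁻¹ • (1 : A)))) :
    κ * κ = (1 + (ν⁻¹ - ν) / (q - q⁻¹)) • κ := by
  rw [← bmw_scalar_identity hq hq2 hν, hκ, smul_mul_smul_comm, mul_self_eq_smul_of_cubic hcubic,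
    smul_smul, smul_smul, mul_right_comm]
end

section
/- In a representation where y_j is diagonalizable, if f is a polynomial annihilating y_{j-1} (f(y_{j-1}) = 0), and the intertwiner relations U_j y_{j-1} = y_j U_j and U_j [σ_{j-1}, y_{j-1}] = (q y_{j-1} − q^{-1} y_j)(q y_j − q^{-1} y_{j-1})(1 − c/(y_{j-1} y_j)) hold with y_{j-1}, y_j invertible and commuting, then f(y_j)·(q^2 y_{j-1} − y_j)(y_j − q^{-2} y_{j-1})(y_j − c y_{j-1}^{-1}) = 0. Consequently Spec(y_j) ⊆ Spec(y_{j-1}) ∪ q^{±2}·Spec(y_{j-1}) ∪ c·Spec(y_{j-1})^{-1}. -/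
/-!
Since `U` intertwines `y'` with `y`, it intertwines `g(y')` with `g(y)` for every polynomial `g`.
After rewriting the quadratic factor and absorbing `y⁻¹`, the product
`P = (q² y' − y)(y − q⁻² y')(y − c y'⁻¹)` becomes `U [σ, y'] y`, so `g(y) P = U g(y') [σ, y'] y`
vanishes whenever `g(y') = 0`.
For the spectrum take `g` the minimal polynomial of `y'` and a common eigenvector `v` of the
commuting operators `y` and `y'`, with eigenvalues `μ` and `λ`: on `v` the identity `g(y) P = 0`
reads `g(μ) (q² λ − μ)(μ − q⁻² λ)(μ − c λ⁻¹) = 0`, and `g(μ) = 0` means `μ ∈ Spec y'`.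
-/

open Polynomial Module.End

theorem SemiconjBy.aeval {R A : Type*} [CommSemiring R] [Semiring A] [Algebra R A] {u a b : A}
    (h : SemiconjBy u a b) (p : R[X]) : SemiconjBy u (aeval a p) (aeval b p) := by
  induction p using Polynomial.induction_on with
  | C r =>
    rw [aeval_C, aeval_C]
    exact (Algebra.commutes r u).symm
  | add p p' hp hp' => simpa using hp.add_right hp'
  | monomial n r ih => simpa [pow_succ, ← mul_assoc] using ih.mul_right h

theorem sq_smul_sub_mul_sub_inv_sq_smul {K A : Type*} [Field K] [Ring A] [Algebra K A]
    {q : K} (hq : q ≠ 0) (a b : A) :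
    (q ^ 2 • a - b) * (b - q⁻¹ ^ 2 • a) = (q • a - q⁻¹ • b) * (q • b - q⁻¹ • a) := by
  simp only [sub_mul, mul_sub, smul_mul_assoc, mul_smul_comm, smul_sub, smul_smul, ← sq]
  match_scalars <;> field_simp

namespace Module.End

variable {K V : Type*} [Field K] [AddCommGroup V] [Module K V]

theorem exists_hasEigenvector_of_commute [IsAlgClosed K] [FiniteDimensional K V]
    {f g : End K V} (h : Commute f g) {μ : K} (hμ : f.HasEigenvalue μ) :
    ∃ (lam : K) (v : V), f.HasEigenvector μ v ∧ g.HasEigenvector lam v := by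
  have hmaps : Set.MapsTo g (f.eigenspace μ) (f.eigenspace μ) :=
    mapsTo_genEigenspace_of_comm h μ 1
  have : Nontrivial (f.eigenspace μ) := Submodule.nontrivial_iff_ne_bot.mpr hμ
  obtain ⟨lam, hlam⟩ := exists_eigenvalue (g.restrict hmaps)
  obtain ⟨w, hw⟩ := hlam.exists_hasEigenvector
  refine ⟨lam, w, ⟨w.2, by simpa using hw.2⟩, ⟨?_, by simpa using hw.2⟩⟩
  exact mem_eigenspace_iff.mpr (congrArg Subtype.val (mem_eigenspace_iff.mp hw.1))

theorem HasEigenvector.apply_eq_inv_smul_of_mul_eq_one {f g : End K V} (hgf : g * f = 1)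
    {lam : K} {v : V} (hv : f.HasEigenvector lam v) : g v = lam⁻¹ • v := by
  have hinv : lam • g v = v := by
    rw [← map_smul, ← mem_eigenspace_iff.mp hv.1, ← mul_apply, hgf, one_apply]
  have hlam : lam ≠ 0 := by
    rintro rfl
    exact hv.2 (by rw [← hinv, zero_smul])
  rw [eq_inv_smul_iff₀ hlam, hinv]

theorem HasEigenvector.eq_zero_or_isRoot {f P : End K V} {μ s : K} {v : V}
    (hv : f.HasEigenvector μ v) (hPv : P v = s • v) {g : K[X]} (h : aeval f g * P = 0) :
    s = 0 ∨ g.IsRoot μ := by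
  simpa [hPv, aeval_apply_of_hasEigenvector hv, smul_smul, hv.2] using congrArg (· v) h

end Module.End

theorem bmw_spectrum_step_general
    (F : Type*) [Field F] [IsAlgClosed F]
    (V : Type*) [AddCommGroup V] [Module F V] [FiniteDimensional F V]
    (q c : F) (hq : q ≠ 0)
    (y' y y'inv yinv U σ : Module.End F V)
    (hy'r : y'inv * y' = 1)
    (hyr : yinv * y = 1)
    (hcomm : y' * y = y * y')
    (hU1 : U * y' = y * U)
    (hU3 : U * (σ * y' - y' * σ) =
      (q • y' - q⁻¹ • y) * (q • y - q⁻¹ • y') * (1 - c • (y'inv * yinv)))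
    (f : Polynomial F) (hf : Polynomial.aeval y' f = 0) :
    (Polynomial.aeval y f) *
        ((q ^ 2 • y' - y) * (y - (q⁻¹) ^ 2 • y') * (y - c • y'inv)) = 0 ∧
      ∀ μ ∈ spectrum F y, ∃ lam ∈ spectrum F y',
        μ = lam ∨ μ = q ^ 2 * lam ∨ μ = (q⁻¹) ^ 2 * lam ∨ μ = c * lam⁻¹ := by
  generalize hPdef : (q ^ 2 • y' - y) * (y - (q⁻¹) ^ 2 • y') * (y - c • y'inv) = P
  have hlin : y - c • y'inv = (1 - c • (y'inv * yinv)) * y := by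
    rw [sub_mul, one_mul, smul_mul_assoc, mul_assoc, hyr, mul_one]
  have hP : P = U * (σ * y' - y' * σ) * y := by
    rw [← hPdef, sq_smul_sub_mul_sub_inv_sq_smul hq, hlin, ← mul_assoc, hU3]
  have hann : ∀ g : F[X], aeval y' g = 0 → aeval y g * P = 0 := fun g hg => by
    rw [hP, ← mul_assoc, ← mul_assoc, ← (SemiconjBy.aeval hU1 g).eq, hg, mul_zero, zero_mul,
      zero_mul]
  refine ⟨hann f hf, fun μ hμ => ?_⟩
  obtain ⟨lam, v, hv, hv'⟩ :=
    exists_hasEigenvector_of_commute hcomm.symm (hasEigenvalue_iff_mem_spectrum.mpr hμ)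
  have hPv : P v = ((q ^ 2 * lam - μ) * (μ - q⁻¹ ^ 2 * lam) * (μ - c * lam⁻¹)) • v := by
    simp only [← hPdef, mul_apply, LinearMap.sub_apply, LinearMap.smul_apply, map_sub, map_smul,
      mem_eigenspace_iff.mp hv.1, mem_eigenspace_iff.mp hv'.1,
      hv'.apply_eq_inv_smul_of_mul_eq_one hy'r]
    module
  obtain hs | hroot := hv.eq_zero_or_isRoot hPv (hann _ (minpoly.aeval F y'))
  · refine ⟨lam, (hasEigenvalue_of_hasEigenvector hv').mem_spectrum, ?_⟩
    simp only [mul_eq_zero, sub_eq_zero] at hs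
    rcases hs with (h | h) | h
    exacts [.inr (.inl h.symm), .inr (.inr (.inl h)), .inr (.inr (.inr h))]
  · exact ⟨μ, hasEigenvalue_iff_mem_spectrum.mp (hasEigenvalue_iff_isRoot.mpr hroot), .inl rfl⟩

/-- If `f` annihilates `y'` (= y_{j-1}) and the intertwiner relations hold, then
`f(y)·(q² y' − y)(y − q⁻² y')(y − c y'⁻¹) = 0`; consequently the spectrum of `y` (= y_j)
is contained in `Spec y' ∪ q^{±2}·Spec y' ∪ c·(Spec y')⁻¹`. -/
theorem bmw_spectrum_step
    (F : Type*) [Field F] [IsAlgClosed F]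
    (V : Type*) [AddCommGroup V] [Module F V] [FiniteDimensional F V]
    (q c : F) (hq : q ≠ 0) (hc : c ≠ 0)
    (y' y y'inv yinv U σ : Module.End F V)
    (hdiag : ∃ (ι : Type) (b : Module.Basis ι F V), ∀ i, ∃ μ : F, y (b i) = μ • b i)
    (hy'l : y' * y'inv = 1) (hy'r : y'inv * y' = 1)
    (hyl : y * yinv = 1) (hyr : yinv * y = 1)
    (hcomm : y' * y = y * y')
    (hU1 : U * y' = y * U) (hU2 : U * y = y' * U)
    (hU3 : U * (σ * y' - y' * σ) =
      (q • y' - q⁻¹ • y) * (q • y - q⁻¹ • y') * (1 - c • (y'inv * yinv)))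
    (f : Polynomial F) (hf : Polynomial.aeval y' f = 0) :
    (Polynomial.aeval y f) *
        ((q ^ 2 • y' - y) * (y - (q⁻¹) ^ 2 • y') * (y - c • y'inv)) = 0 ∧
      ∀ μ ∈ spectrum F y, ∃ lam ∈ spectrum F y',
        μ = lam ∨ μ = q ^ 2 * lam ∨ μ = (q⁻¹) ^ 2 * lam ∨ μ = c * lam⁻¹ :=
  bmw_spectrum_step_general F V q c hq y' y y'inv yinv U σ hy'r hyr hcomm hU1 hU3 f hf
end

section
/- The 2×2 representation of αH_2 with σ = [[0,1],[1,q−q^{-1}]], y_i = [[a, −(q−q^{-1})b],[0,b]], y_{i+1} = [[b,(q−q^{-1})b],[0,a]] is irreducible if and only if a ≠ q^2 b and a ≠ q^{-2} b (for a ≠ b). -/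
/-!
In dimension two a nonzero proper invariant subspace is a line spanned by a common eigenvector.
An eigenvector of `σ` is a multiple of `(1, c)` with `c² = (q - q⁻¹) c + 1`, i.e. `c = q` or
`c = -q⁻¹`. As `c ≠ 0`, the second coordinate forces the `y_i`-eigenvalue to be `b`, and the first
coordinate then reads `a = b + (q - q⁻¹) b c`, which is `a = q² b` resp. `a = q⁻² b`; conversely
such a vector `(1, c)` is also an eigenvector of `y_{i+1}`, with eigenvalue `a`.
-/

open Matrix Module Submodule

section Invariant

variable {F V : Type*} [Field F] [AddCommGroup V] [Module F V]

theorem Submodule.eq_bot_or_eq_top_or_eq_span_singleton (hV : finrank F V = 2)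
    (W : Submodule F V) : W = ⊥ ∨ W = ⊤ ∨ ∃ v ≠ 0, W = span F {v} := by
  have : FiniteDimensional F V := .of_finrank_pos (by omega)
  rcases eq_or_ne W ⊥ with hW | hW
  · exact .inl hW
  obtain ⟨v, hvW, hv⟩ := W.ne_bot_iff.mp hW
  rcases (span_singleton_le_iff_mem v W |>.mpr hvW).eq_or_lt with hWv | hlt
  · exact .inr (.inr ⟨v, hv, hWv.symm⟩)
  refine .inr (.inl (eq_top_of_finrank_eq (le_antisymm (finrank_le W) ?_)))
  have := finrank_lt_finrank_of_lt hlt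
  rw [finrank_span_singleton hv] at this
  omega

theorem span_singleton_invariant_iff (f : V →ₗ[F] V) (v : V) :
    (∀ w ∈ span F {v}, f w ∈ span F {v}) ↔ ∃ c : F, f v = c • v := by
  refine ⟨fun h ↦ ?_, fun ⟨c, hc⟩ w hw ↦ ?_⟩
  · obtain ⟨c, hc⟩ := mem_span_singleton.mp (h v (mem_span_singleton_self v))
    exact ⟨c, hc.symm⟩
  · obtain ⟨t, rfl⟩ := mem_span_singleton.mp hw
    rw [map_smul, hc]
    exact smul_mem _ _ (smul_mem _ _ (mem_span_singleton_self v))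

theorem forall_invariant_eq_bot_or_eq_top_iff (hV : finrank F V = 2) (S : Set (V →ₗ[F] V)) :
    (∀ W : Submodule F V, (∀ f ∈ S, ∀ v ∈ W, f v ∈ W) → W = ⊥ ∨ W = ⊤) ↔
      ¬∃ v ≠ 0, ∀ f ∈ S, ∃ c : F, f v = c • v := by
  refine ⟨fun hirr ⟨v, hv, heig⟩ ↦ ?_, fun hno W hW ↦ ?_⟩
  · have hline : span F {v} ≠ ⊤ := fun h ↦ by
      have := finrank_top F V
      rw [← h, finrank_span_singleton hv] at this
      omega
    exact (hirr (span F {v}) fun f hf ↦ (span_singleton_invariant_iff f v).mpr (heig f hf)).elim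
      (fun h ↦ hv (span_singleton_eq_bot.mp h)) hline
  · obtain hW' | hW' | ⟨v, hv, rfl⟩ := W.eq_bot_or_eq_top_or_eq_span_singleton hV
    · exact .inl hW'
    · exact .inr hW'
    · exact (hno ⟨v, hv, fun f hf ↦ (span_singleton_invariant_iff f v).mp (hW f hf)⟩).elim

end Invariant

namespace AffineHeckeRep

variable {F : Type*} [Field F] (q a b : F)

def sigma : Matrix (Fin 2) (Fin 2) F := !![0, 1; 1, q - q⁻¹]

def y : Matrix (Fin 2) (Fin 2) F := !![a, -(q - q⁻¹) * b; 0, b]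

def ySucc : Matrix (Fin 2) (Fin 2) F := !![b, (q - q⁻¹) * b; 0, a]

theorem sigma_mulVec (v : Fin 2 → F) : sigma q *ᵥ v = ![v 1, v 0 + (q - q⁻¹) * v 1] := by
  ext i; fin_cases i <;> simp [sigma, vecHead, vecTail]

theorem y_mulVec (v : Fin 2 → F) : y q a b *ᵥ v = ![a * v 0 - (q - q⁻¹) * b * v 1, b * v 1] := by
  ext i; fin_cases i <;> simp [y, vecHead, vecTail]; ring

theorem ySucc_mulVec (v : Fin 2 → F) :
    ySucc q a b *ᵥ v = ![b * v 0 + (q - q⁻¹) * b * v 1, a * v 1] := by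
  ext i; fin_cases i <;> simp [ySucc, vecHead, vecTail]

theorem exists_common_eigenvector_iff_exists_eigenvalue :
    (∃ v : Fin 2 → F, v ≠ 0 ∧ (∃ c : F, sigma q *ᵥ v = c • v) ∧ (∃ d : F, y q a b *ᵥ v = d • v) ∧
        (∃ d : F, ySucc q a b *ᵥ v = d • v)) ↔
      ∃ c : F, c ^ 2 = (q - q⁻¹) * c + 1 ∧ a = b + (q - q⁻¹) * b * c := by
  constructor
  · rintro ⟨v, hv, ⟨c, hc⟩, ⟨d, hd⟩, -⟩
    rw [sigma_mulVec] at hc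
    rw [y_mulVec] at hd
    have hc0 : v 1 = c * v 0 := by simpa using congr_fun hc 0
    have hc1 : v 0 + (q - q⁻¹) * v 1 = c * v 1 := by simpa using congr_fun hc 1
    have hd0 : a * v 0 - (q - q⁻¹) * b * v 1 = d * v 0 := by simpa using congr_fun hd 0
    have hd1 : b * v 1 = d * v 1 := by simpa using congr_fun hd 1
    have hv0 : v 0 ≠ 0 := fun h ↦ hv (by ext i; fin_cases i <;> simp [h, hc0])
    have hchar : c ^ 2 = (q - q⁻¹) * c + 1 :=
      mul_right_cancel₀ hv0 (by linear_combination -hc1 + (q - q⁻¹ - c) * hc0)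
    have hv1 : v 1 ≠ 0 := by
      refine hc0 ▸ mul_ne_zero ?_ hv0
      rintro rfl
      simp at hchar
    have hdb : d = b := (mul_right_cancel₀ hv1 hd1).symm
    refine ⟨c, hchar, mul_right_cancel₀ hv0 ?_⟩
    linear_combination hd0 + v 0 * hdb + (q - q⁻¹) * b * hc0
  · rintro ⟨c, hchar, hab⟩
    refine ⟨![1, c], by simp, ⟨c, ?_⟩, ⟨b, ?_⟩, ⟨a, ?_⟩⟩ <;>
      simp only [sigma_mulVec, y_mulVec, ySucc_mulVec] <;> ext i <;> fin_cases i <;> simp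
    · linear_combination -hchar
    · linear_combination hab
    · linear_combination -hab

theorem sq_eq_sub_inv_mul_add_one_iff {q : F} (hq : q ≠ 0) (c : F) :
    c ^ 2 = (q - q⁻¹) * c + 1 ↔ c = q ∨ c = -q⁻¹ := by
  have hfactor : c ^ 2 - ((q - q⁻¹) * c + 1) = (c - q) * (c + q⁻¹) := by
    linear_combination (mul_inv_cancel₀ hq)
  rw [← sub_eq_zero, hfactor, mul_eq_zero, sub_eq_zero, add_eq_zero_iff_eq_neg]

theorem exists_common_eigenvector_iff {q : F} (hq : q ≠ 0) :
    (∃ v : Fin 2 → F, v ≠ 0 ∧ (∃ c : F, sigma q *ᵥ v = c • v) ∧ (∃ d : F, y q a b *ᵥ v = d • v) ∧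
        (∃ d : F, ySucc q a b *ᵥ v = d • v)) ↔
      a = q ^ 2 * b ∨ a = q⁻¹ ^ 2 * b := by
  have hq' := mul_inv_cancel₀ hq
  have hroot : b + (q - q⁻¹) * b * q = q ^ 2 * b := by linear_combination -b * hq'
  have hroot' : b + (q - q⁻¹) * b * -q⁻¹ = q⁻¹ ^ 2 * b := by linear_combination -b * hq'
  simp only [exists_common_eigenvector_iff_exists_eigenvalue, sq_eq_sub_inv_mul_add_one_iff hq,
    or_and_right, exists_or, exists_eq_left, hroot, hroot']

end AffineHeckeRep

theorem affine_hecke_two_dim_irreducible_iff_general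
    (F : Type*) [Field F] (q a b : F)
    (hq : q ≠ 0)
    (σ yi yi1 : Matrix (Fin 2) (Fin 2) F)
    (hσ : σ = !![0, 1; 1, q - q⁻¹])
    (hyi : yi = !![a, -(q - q⁻¹) * b; 0, b])
    (hyi1 : yi1 = !![b, (q - q⁻¹) * b; 0, a]) :
    (∀ W : Submodule F (Fin 2 → F),
        (∀ v ∈ W, σ.mulVec v ∈ W) → (∀ v ∈ W, yi.mulVec v ∈ W) →
        (∀ v ∈ W, yi1.mulVec v ∈ W) → W = ⊥ ∨ W = ⊤) ↔
      (a ≠ q ^ 2 * b ∧ a ≠ (q⁻¹) ^ 2 * b) := by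
  have h := forall_invariant_eq_bot_or_eq_top_iff (finrank_fin_fun F)
    {toLin' σ, toLin' yi, toLin' yi1}
  simp only [Set.forall_mem_insert, Set.mem_singleton_iff, forall_eq, toLin'_apply, and_imp] at h
  obtain rfl : σ = AffineHeckeRep.sigma q := hσ
  obtain rfl : yi = AffineHeckeRep.y q a b := hyi
  obtain rfl : yi1 = AffineHeckeRep.ySucc q a b := hyi1
  rw [h, AffineHeckeRep.exists_common_eigenvector_iff a b hq, not_or]

/-- The 2×2 representation of `αH₂` with matrices `σ`, `y_i`, `y_{i+1}` is irreducible
iff `a ≠ q² b` and `a ≠ q⁻² b`. -/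
theorem affine_hecke_two_dim_irreducible_iff
    (F : Type*) [Field F] [IsAlgClosed F] (q a b : F)
    (hq : q ≠ 0) (hq2 : q ^ 2 ≠ 1) (ha : a ≠ 0) (hb : b ≠ 0) (hab : a ≠ b)
    (σ yi yi1 : Matrix (Fin 2) (Fin 2) F)
    (hσ : σ = !![0, 1; 1, q - q⁻¹])
    (hyi : yi = !![a, -(q - q⁻¹) * b; 0, b])
    (hyi1 : yi1 = !![b, (q - q⁻¹) * b; 0, a]) :
    (∀ W : Submodule F (Fin 2 → F),
        (∀ v ∈ W, σ.mulVec v ∈ W) → (∀ v ∈ W, yi.mulVec v ∈ W) →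
        (∀ v ∈ W, yi1.mulVec v ∈ W) → W = ⊥ ∨ W = ⊤) ↔
      (a ≠ q ^ 2 * b ∧ a ≠ (q⁻¹) ^ 2 * b) :=
  affine_hecke_two_dim_irreducible_iff_general F q a b hq σ yi yi1 hσ hyi hyi1
end

section
/- Let a_1, ..., a_n be a sequence with a_1 = 1 and each a_i ∈ {q^{2z} : z ∈ ℤ} ∪ {ν^2 q^{2z} : z ∈ ℤ}, where q, ν are such that q^{2ℤ} and ν^2 q^{2ℤ} are disjoint and q is not a root of unity. If a_i a_{i+1} ≠ ν^2, a_{i+1} ≠ q^{±2} a_i, and a_i ≠ a_{i+1}, then the swapped sequence (a_1,...,a_{i+1},a_i,...,a_n) satisfies the same membership constraints (1)–(3) of Proposition 5 whenever the original does. -/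
/-- The admissibility conditions (1)–(3) of Proposition 5 for a string `a 1, ..., a n`:
(1) `a 1 = 1`; (2) if `a i = ν² q^{-2z}` then `q^{2z}` occurs earlier;
(3) if `a i = q^{2z}` with `z ≠ 0` then `q^{2(z+1)}` or `q^{2(z-1)}` occurs earlier. -/
def SpecStringCond {F : Type*} [Field F] (q ν : F) (n : ℕ) (a : ℕ → F) : Prop :=
  a 1 = 1 ∧
    (∀ i, 1 ≤ i → i ≤ n → ∀ z : ℤ, a i = ν ^ 2 * q ^ (-2 * z) →
      ∃ j, 1 ≤ j ∧ j < i ∧ a j = q ^ (2 * z)) ∧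
    (∀ i, 1 ≤ i → i ≤ n → ∀ z : ℤ, z ≠ 0 → a i = q ^ (2 * z) →
      ∃ j, 1 ≤ j ∧ j < i ∧ (a j = q ^ (2 * (z + 1)) ∨ a j = q ^ (2 * (z - 1))))

/-- If `a_i a_{i+1} ≠ ν²`, `a_{i+1} ≠ q^{±2} a_i` and `a_i ≠ a_{i+1}`, then swapping the
adjacent entries `a_i, a_{i+1}` preserves the admissibility conditions (1)–(3). -/
theorem spec_string_swap
    (F : Type*) [Field F] (q ν : F) (hq : q ≠ 0) (hν : ν ≠ 0)
    (hdisj : ∀ z w : ℤ, q ^ (2 * z) ≠ ν ^ 2 * q ^ (2 * w))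
    (hroot : ∀ m : ℕ, 0 < m → q ^ m ≠ 1)
    (n : ℕ) (a : ℕ → F)
    (hmem : ∀ j, 1 ≤ j → j ≤ n → ∃ z : ℤ, a j = q ^ (2 * z) ∨ a j = ν ^ 2 * q ^ (2 * z))
    (i : ℕ) (hi : 1 ≤ i) (hin : i + 1 ≤ n)
    (hprod : a i * a (i + 1) ≠ ν ^ 2)
    (hup : a (i + 1) ≠ q ^ 2 * a i)
    (hdown : a (i + 1) ≠ (q ^ 2)⁻¹ * a i)
    (hne : a i ≠ a (i + 1))
    (a' : ℕ → F)
    (ha' : a' = fun j => if j = i then a (i + 1) else if j = i + 1 then a i else a j)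
    (h : SpecStringCond q ν n a) :
    SpecStringCond q ν n a' := by
  obtain ⟨h1, h2, h3⟩ := h
  have ha'' : ∀ j, a' j = if j = i then a (i + 1) else if j = i + 1 then a i else a j := by
    intro j; rw [ha']
  -- q is not a root of unity, integer-power version
  have hone : ∀ z : ℤ, q ^ z = 1 → z = 0 := by
    intro z hz
    rcases lt_trichotomy z 0 with h0 | h0 | h0
    · exfalso
      refine hroot (-z).toNat (by omega) ?_
      have hzz : q ^ (-z) = 1 := by rw [zpow_neg, hz, inv_one]
      rw [← hzz, ← zpow_natCast, Int.toNat_of_nonneg (by omega)]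
    · exact h0
    · exfalso
      refine hroot z.toNat (by omega) ?_
      rw [← hz, ← zpow_natCast, Int.toNat_of_nonneg (by omega)]
  have hq2 : (q ^ 2 : F) = q ^ (2 : ℤ) := by
    rw [← zpow_natCast]; norm_num
  have hup' : ∀ z : ℤ, (q ^ 2)⁻¹ * q ^ (2 * (z + 1)) = q ^ (2 * z) := by
    intro z
    rw [hq2, ← zpow_neg, ← zpow_add₀ hq]
    congr 1; ring
  have hdn' : ∀ z : ℤ, q ^ 2 * q ^ (2 * (z - 1)) = q ^ (2 * z) := by
    intro z
    rw [hq2, ← zpow_add₀ hq]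
    congr 1; ring
  have hcanc : ∀ z : ℤ, q ^ (2 * z) * (ν ^ 2 * q ^ (-2 * z)) = ν ^ 2 := by
    intro z
    rw [mul_comm, mul_assoc, ← zpow_add₀ hq]
    norm_num
  -- i cannot be 1
  have hi2 : 2 ≤ i := by
    by_contra hc
    have hi1 : i = 1 := by omega
    subst hi1
    obtain ⟨z, hz | hz⟩ := hmem 2 (by omega) (by omega)
    · rcases eq_or_ne z 0 with rfl | hz0
      · exact hne (by rw [h1, hz]; norm_num)
      · obtain ⟨j, hj1, hj2, hj⟩ := h3 2 (by omega) hin z hz0 hz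
        have hj' : j = 1 := by omega
        subst hj'
        rcases hj with hj | hj
        · have hz1 := hone (2 * (z + 1)) (by rw [← hj, h1])
          apply hdown
          rw [h1, mul_one, hz]
          have : z = -1 := by omega
          subst this
          rw [← hup' (-1)]
          norm_num
        · have hz1 := hone (2 * (z - 1)) (by rw [← hj, h1])
          apply hup
          rw [h1, mul_one, hz]
          have : z = 1 := by omega
          subst this
          rw [← hdn' 1]
          norm_num
    · have hz' : a 2 = ν ^ 2 * q ^ (-2 * (-z)) := by rw [hz]; norm_num
      obtain ⟨j, hj1, hj2, hj⟩ := h2 2 (by omega) (by omega) (-z) hz'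
      have hj' : j = 1 := by omega
      subst hj'
      have hz0 := hone (2 * (-z)) (by rw [← hj, h1])
      have hz0' : z = 0 := by omega
      subst hz0'
      apply hprod
      rw [h1, one_mul, hz]
      norm_num
  refine ⟨?_, ?_, ?_⟩
  · rw [ha'' 1, if_neg (by omega), if_neg (by omega)]
    exact h1
  · intro k hk1 hkn z hz
    rw [ha'' k] at hz
    by_cases hki : k = i
    · subst hki
      rw [if_pos rfl] at hz
      obtain ⟨j, hj1, hj2, hj⟩ := h2 (k + 1) (by omega) hin z hz
      have hjk : j ≠ k := by
        intro hjk
        subst hjk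
        exact hprod (by rw [hj, hz]; exact hcanc z)
      refine ⟨j, hj1, by omega, ?_⟩
      rw [ha'' j, if_neg hjk, if_neg (by omega)]
      exact hj
    · by_cases hki1 : k = i + 1
      · subst hki1
        rw [if_neg hki, if_pos rfl] at hz
        obtain ⟨j, hj1, hj2, hj⟩ := h2 i hi (by omega) z hz
        refine ⟨j, hj1, by omega, ?_⟩
        rw [ha'' j, if_neg (by omega), if_neg (by omega)]
        exact hj
      · rw [if_neg hki, if_neg hki1] at hz
        obtain ⟨j, hj1, hj2, hj⟩ := h2 k hk1 hkn z hz
        by_cases hji : j = i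
        · subst hji
          refine ⟨j + 1, by omega, by omega, ?_⟩
          rw [ha'' (j + 1), if_neg (by omega), if_pos rfl]
          exact hj
        · by_cases hji1 : j = i + 1
          · refine ⟨i, hi, by omega, ?_⟩
            rw [ha'' i, if_pos rfl, ← hji1]
            exact hj
          · refine ⟨j, hj1, hj2, ?_⟩
            rw [ha'' j, if_neg hji, if_neg hji1]
            exact hj
  · intro k hk1 hkn z hz0 hz
    rw [ha'' k] at hz
    by_cases hki : k = i
    · subst hki
      rw [if_pos rfl] at hz
      obtain ⟨j, hj1, hj2, hj⟩ := h3 (k + 1) (by omega) hin z hz0 hz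
      have hjk : j ≠ k := by
        intro hjk
        subst hjk
        rcases hj with hj | hj
        · exact hdown (by rw [hj, hz, hup'])
        · exact hup (by rw [hj, hz, hdn'])
      refine ⟨j, hj1, by omega, ?_⟩
      rw [ha'' j, if_neg hjk, if_neg (by omega)]
      exact hj
    · by_cases hki1 : k = i + 1
      · subst hki1
        rw [if_neg hki, if_pos rfl] at hz
        obtain ⟨j, hj1, hj2, hj⟩ := h3 i hi (by omega) z hz0 hz
        refine ⟨j, hj1, by omega, ?_⟩
        rw [ha'' j, if_neg (by omega), if_neg (by omega)]
        exact hj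
      · rw [if_neg hki, if_neg hki1] at hz
        obtain ⟨j, hj1, hj2, hj⟩ := h3 k hk1 hkn z hz0 hz
        by_cases hji : j = i
        · subst hji
          refine ⟨j + 1, by omega, by omega, ?_⟩
          rw [ha'' (j + 1), if_neg (by omega), if_pos rfl]
          exact hj
        · by_cases hji1 : j = i + 1
          · refine ⟨i, hi, by omega, ?_⟩
            rw [ha'' i, if_pos rfl, ← hji1]
            exact hj
          · refine ⟨j, hj1, hj2, ?_⟩
            rw [ha'' j, if_neg hji, if_neg hji1]
            exact hj
end

section
/- The number of paths of length n from the empty diagram in the oscillating Young graph (where at each step one box is added or removed from a Young diagram) ending at the empty diagram equals (n−1)!! when n is even (and 0 when n is odd); in particular the total number of oscillating tableaux of length n ending anywhere, weighted by the square of multiplicities, is (2n−1)!! = dim BMW_n. -/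
open scoped Nat

/-- An oscillating tableau of length `n`: a sequence of Young diagrams starting at `∅`
in which consecutive diagrams differ by adding or removing exactly one box. -/
def IsOscillatingTableau (n : ℕ) (f : Fin (n + 1) → YoungDiagram) : Prop :=
  f 0 = ⊥ ∧ ∀ k : Fin n,
    (f k.castSucc ≤ f k.succ ∧ (f k.succ).card = (f k.castSucc).card + 1) ∨
    (f k.succ ≤ f k.castSucc ∧ (f k.castSucc).card = (f k.succ).card + 1)

/-!
Young's lattice is a differential poset. Let `U` send a diagram to the sum of the diagrams
covering it and `D` to the sum of the diagrams it covers. Then `DU = UD + I`: a diagram has one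
more addable than removable row, and two distinct diagrams have a common cover exactly when
they have a common cocover (their join, resp. meet, is one box away from both).

The vector `vₙ = (U + D)ⁿ ∅` counts oscillating tableaux of length `n` by their endpoint.
From `DU = UD + I` one gets `D vₙ₊₁ = (n + 1) vₙ`, hence `vₙ₊₂(∅) = (n + 1) vₙ(∅)`, which gives
the double factorials. Since `U` and `D` are adjoint for the pairing `⟨x, y⟩ = ∑ x(λ) y(λ)`,
`⟨vₐ, v_b⟩ = ⟨vₐ₊₁, v_b₋₁⟩ = … = vₐ₊_b(∅)`; with `a = b = n` this is `∑ vₙ(λ)² = v₂ₙ(∅)`.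
-/

open Finset Finsupp

section

variable {α R : Type*} [DecidableEq α] [Semiring R]

theorem Finsupp.linearCombination_sum_single_one_apply {s t : α → Finset α}
    (hst : ∀ a b, b ∈ s a ↔ a ∈ t b) (x : α →₀ R) (b : α) :
    linearCombination R (fun a => ∑ c ∈ s a, single c 1) x b = ∑ a ∈ t b, x a := by
  induction x using Finsupp.induction_linear with
  | zero => simp
  | add x y hx hy => simp [hx, hy, sum_add_distrib]
  | single a r => simp [single_apply, Finset.sum_ite_eq', hst]

end

instance : DecidableEq YoungDiagram := fun _ _ => decidable_of_iff _ YoungDiagram.ext_iff.symm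

namespace YoungDiagram

variable {μ ν : YoungDiagram} {i : ℕ}

theorem eq_of_le_of_card_le (h : μ ≤ ν) (hc : ν.card ≤ μ.card) : μ = ν :=
  YoungDiagram.ext (Finset.eq_of_subset_of_card_le (cells_subset_iff.2 h) hc)

theorem card_sup_add_card_inf (μ ν : YoungDiagram) :
    (μ ⊔ ν).card + (μ ⊓ ν).card = μ.card + ν.card := by
  simp only [YoungDiagram.card, cells_sup, cells_inf, card_union_add_card_inter]

theorem exists_notMem_cells_eq_insert (h : μ ≤ ν) (hc : ν.card = μ.card + 1) :
    ∃ c ∉ μ, ν.cells = insert c μ.cells := by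
  obtain ⟨c, hc, hν⟩ := exists_eq_insert_iff.2 ⟨cells_subset_iff.2 h, hc.symm⟩
  exact ⟨c, by simpa using hc, hν.symm⟩

def IsAddableRow (μ : YoungDiagram) (i : ℕ) : Prop :=
  i = 0 ∨ μ.rowLen i < μ.rowLen (i - 1)

def IsRemovableRow (μ : YoungDiagram) (i : ℕ) : Prop :=
  μ.rowLen (i + 1) < μ.rowLen i

instance : DecidablePred μ.IsAddableRow := fun _ => inferInstanceAs (Decidable (_ ∨ _))

instance : DecidablePred μ.IsRemovableRow := fun _ => inferInstanceAs (Decidable (_ < _))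

theorem isAddableRow_succ_iff : μ.IsAddableRow (i + 1) ↔ μ.IsRemovableRow i := by
  simp [IsAddableRow, IsRemovableRow]

theorem IsAddableRow.le_colLen (h : μ.IsAddableRow i) : i ≤ μ.colLen 0 := by
  rcases h with rfl | h
  · exact Nat.zero_le _
  · have : (i - 1, 0) ∈ μ := mem_iff_lt_rowLen.2 (by omega)
    rw [mem_iff_lt_colLen] at this
    omega

theorem IsRemovableRow.lt_colLen (h : μ.IsRemovableRow i) : i < μ.colLen 0 :=
  mem_iff_lt_colLen.1 (mem_iff_lt_rowLen.2 (Nat.zero_lt_of_lt h))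

def addCell (μ : YoungDiagram) (i : ℕ) (h : μ.IsAddableRow i) : YoungDiagram where
  cells := insert (i, μ.rowLen i) μ.cells
  isLowerSet := by
    rintro ⟨a, b⟩ ⟨a', b'⟩ ⟨ha : a' ≤ a, hb : b' ≤ b⟩ hc
    simp only [coe_insert, Set.mem_insert_iff, Prod.mk.injEq, mem_coe, mem_cells,
      mem_iff_lt_rowLen] at hc ⊢
    have := μ.rowLen_anti a' a ha
    rcases hc with ⟨rfl, rfl⟩ | hc
    · rcases eq_or_lt_of_le ha with rfl | ha
      · omega
      · have := μ.rowLen_anti a' (a - 1) (by omega)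
        rcases h with h | h <;> omega
    · omega

theorem mem_addCell (h : μ.IsAddableRow i) {c : ℕ × ℕ} :
    c ∈ μ.addCell i h ↔ c = (i, μ.rowLen i) ∨ c ∈ μ := by
  rw [← mem_cells]
  simp [addCell]

theorem mk_rowLen_notMem (μ : YoungDiagram) (i : ℕ) : (i, μ.rowLen i) ∉ μ := by
  simp [mem_iff_lt_rowLen]

def removeCell (μ : YoungDiagram) (i : ℕ) (h : μ.IsRemovableRow i) : YoungDiagram where
  cells := μ.cells.erase (i, μ.rowLen i - 1)
  isLowerSet := by
    rintro ⟨a, b⟩ ⟨a', b'⟩ ⟨ha : a' ≤ a, hb : b' ≤ b⟩ hc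
    simp only [coe_erase, Set.mem_sdiff, mem_coe, mem_cells, Set.mem_singleton_iff,
      Prod.mk.injEq, mem_iff_lt_rowLen] at hc ⊢
    refine ⟨by have := μ.rowLen_anti a' a ha; omega, ?_⟩
    rintro ⟨rfl, rfl⟩
    rcases eq_or_lt_of_le ha with rfl | ha
    · omega
    · have := μ.rowLen_anti (a' + 1) a ha
      unfold IsRemovableRow at h
      omega

theorem mk_rowLen_sub_one_mem (h : μ.IsRemovableRow i) : (i, μ.rowLen i - 1) ∈ μ :=
  mem_iff_lt_rowLen.2 (Nat.sub_lt (Nat.zero_lt_of_lt h) one_pos)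

theorem mem_removeCell (h : μ.IsRemovableRow i) {c : ℕ × ℕ} :
    c ∈ μ.removeCell i h ↔ c ≠ (i, μ.rowLen i - 1) ∧ c ∈ μ := by
  rw [← mem_cells]
  simp [removeCell]

def addableRows (μ : YoungDiagram) : Finset ℕ :=
  {i ∈ range (μ.colLen 0 + 1) | μ.IsAddableRow i}

def removableRows (μ : YoungDiagram) : Finset ℕ :=
  {i ∈ range (μ.colLen 0) | μ.IsRemovableRow i}

theorem mem_addableRows : i ∈ μ.addableRows ↔ μ.IsAddableRow i := by
  simpa [addableRows] using fun h => Nat.lt_succ_of_le h.le_colLen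

theorem mem_removableRows : i ∈ μ.removableRows ↔ μ.IsRemovableRow i := by
  simpa [removableRows] using IsRemovableRow.lt_colLen

theorem card_addableRows (μ : YoungDiagram) : #μ.addableRows = #μ.removableRows + 1 := by
  rw [addableRows, range_add_one', filter_insert,
    if_pos (show μ.IsAddableRow 0 from Or.inl rfl), filter_map, card_insert_of_notMem (by simp),
    card_map]
  congr 3
  ext i
  exact isAddableRow_succ_iff

def covers (μ : YoungDiagram) : Finset YoungDiagram :=
  μ.addableRows.attach.image fun r => μ.addCell r.1 (mem_addableRows.1 r.2)

def cocovers (μ : YoungDiagram) : Finset YoungDiagram :=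
  μ.removableRows.attach.image fun r => μ.removeCell r.1 (mem_removableRows.1 r.2)

theorem mem_covers : ν ∈ μ.covers ↔ μ ≤ ν ∧ ν.card = μ.card + 1 := by
  constructor
  · simp only [covers, mem_image, mem_attach, true_and, Subtype.exists]
    rintro ⟨i, hi, rfl⟩
    exact ⟨cells_subset_iff.1 (subset_insert _ _),
      card_insert_of_notMem (by simpa using μ.mk_rowLen_notMem i)⟩
  · rintro ⟨hle, hcard⟩
    obtain ⟨⟨i, j⟩, hc, hν⟩ := exists_notMem_cells_eq_insert hle hcard
    have hmem : ∀ x, x ∈ ν ↔ x = (i, j) ∨ x ∈ μ := fun x => by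
      rw [← mem_cells, hν, mem_insert, mem_cells]
    have hij : (i, j) ∈ ν := (hmem _).2 (Or.inl rfl)
    obtain rfl : j = μ.rowLen i := by
      have hge : μ.rowLen i ≤ j := not_lt.1 (mt mem_iff_lt_rowLen.2 hc)
      rcases (hmem _).1 (ν.up_left_mem le_rfl hge hij) with h | h
      · exact (congrArg Prod.snd h).symm
      · exact absurd h (μ.mk_rowLen_notMem i)
    have hadd : μ.IsAddableRow i := by
      rcases i with _ | i
      · exact Or.inl rfl
      · rcases (hmem _).1 (ν.up_left_mem (Nat.le_succ i) le_rfl hij) with h | h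
        · simp at h
        · exact Or.inr (mem_iff_lt_rowLen.1 h)
    exact mem_image.2 ⟨⟨i, mem_addableRows.2 hadd⟩, mem_attach _ _, YoungDiagram.ext hν.symm⟩

theorem mem_cocovers : ν ∈ μ.cocovers ↔ ν ≤ μ ∧ μ.card = ν.card + 1 := by
  constructor
  · simp only [cocovers, mem_image, mem_attach, true_and, Subtype.exists]
    rintro ⟨i, hi, rfl⟩
    exact ⟨cells_subset_iff.1 (erase_subset _ _),
      (card_erase_add_one ((mem_cells _).2 (mk_rowLen_sub_one_mem (mem_removableRows.1 hi)))).symm⟩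
  · rintro ⟨hle, hcard⟩
    obtain ⟨⟨i, j⟩, hc, hμ⟩ := exists_notMem_cells_eq_insert hle hcard
    have hmem : ∀ x, x ∈ μ ↔ x = (i, j) ∨ x ∈ ν := fun x => by
      rw [← mem_cells, hμ, mem_insert, mem_cells]
    have hnotMem : ∀ x, (i, j) ≤ x → x ≠ (i, j) → x ∉ μ := fun x hx hne hxμ =>
      hc (ν.isLowerSet hx (((hmem x).1 hxμ).resolve_left hne))
    have hij := mem_iff_lt_rowLen.1 ((hmem (i, j)).2 (Or.inl rfl))
    have hright := mt mem_iff_lt_rowLen.2 (hnotMem (i, j + 1) ⟨le_rfl, j.le_succ⟩ (by simp))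
    have hbelow := mt mem_iff_lt_rowLen.2 (hnotMem (i + 1, j) ⟨i.le_succ, le_rfl⟩ (by simp))
    have hrem : μ.IsRemovableRow i := by unfold IsRemovableRow; omega
    refine mem_image.2 ⟨⟨i, mem_removableRows.2 hrem⟩, mem_attach _ _, YoungDiagram.ext ?_⟩
    change μ.cells.erase _ = _
    rw [show μ.rowLen i - 1 = j by omega, hμ, erase_insert (by simpa using hc)]

theorem mem_covers_iff_mem_cocovers : ν ∈ μ.covers ↔ μ ∈ ν.cocovers := by
  rw [mem_covers, mem_cocovers]

theorem card_covers (μ : YoungDiagram) : #μ.covers = #μ.addableRows := by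
  refine (card_image_of_injective _ fun ⟨i, hi⟩ ⟨j, hj⟩ hij => Subtype.ext ?_).trans card_attach
  have hi' := (mem_addCell (mem_addableRows.1 hi)).2 (Or.inl rfl)
  rw [hij, mem_addCell] at hi'
  exact congrArg Prod.fst (hi'.resolve_right (μ.mk_rowLen_notMem i))

theorem card_cocovers (μ : YoungDiagram) : #μ.cocovers = #μ.removableRows := by
  refine (card_image_of_injective _ fun ⟨i, hi⟩ ⟨j, hj⟩ hij => Subtype.ext ?_).trans card_attach
  by_contra hne
  have hcorner : (i, μ.rowLen i - 1) ∈ μ.removeCell j (mem_removableRows.1 hj) :=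
    (mem_removeCell _).2
      ⟨fun h => hne (congrArg Prod.fst h), mk_rowLen_sub_one_mem (mem_removableRows.1 hi)⟩
  rw [← hij, mem_removeCell] at hcorner
  exact hcorner.1 rfl

theorem card_covers_eq_card_cocovers_add_one (μ : YoungDiagram) :
    #μ.covers = #μ.cocovers + 1 := by
  rw [card_covers, card_cocovers, card_addableRows]

theorem covers_inter_covers_of_ne (h : μ ≠ ν) :
    μ.covers ∩ ν.covers =
      ({μ ⊔ ν} : Finset YoungDiagram).filter
        (fun κ => κ.card = μ.card + 1 ∧ κ.card = ν.card + 1) := by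
  ext κ
  simp only [mem_inter, mem_covers, mem_filter, mem_singleton]
  constructor
  · rintro ⟨⟨hμ, hμc⟩, hν, hνc⟩
    refine ⟨?_, hμc, hνc⟩
    have hle : μ ⊔ ν ≤ κ := sup_le hμ hν
    have hlt : μ.card < (μ ⊔ ν).card := by
      by_contra! H
      have hsup := eq_of_le_of_card_le le_sup_left H
      exact h (eq_of_le_of_card_le (hsup ▸ le_sup_right) (by omega)).symm
    exact (eq_of_le_of_card_le hle (by omega)).symm
  · rintro ⟨rfl, hμc, hνc⟩
    exact ⟨⟨le_sup_left, hμc⟩, le_sup_right, hνc⟩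

theorem cocovers_inter_cocovers_of_ne (h : μ ≠ ν) :
    μ.cocovers ∩ ν.cocovers =
      ({μ ⊓ ν} : Finset YoungDiagram).filter
        (fun κ => μ.card = κ.card + 1 ∧ ν.card = κ.card + 1) := by
  ext κ
  simp only [mem_inter, mem_cocovers, mem_filter, mem_singleton]
  constructor
  · rintro ⟨⟨hμ, hμc⟩, hν, hνc⟩
    refine ⟨?_, hμc, hνc⟩
    have hle : κ ≤ μ ⊓ ν := le_inf hμ hν
    have hlt : (μ ⊓ ν).card < μ.card := by
      by_contra! H
      have hinf := eq_of_le_of_card_le inf_le_left H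
      exact h (eq_of_le_of_card_le (hinf ▸ inf_le_right) (by omega))
    exact eq_of_le_of_card_le hle (by omega)
  · rintro ⟨rfl, hμc, hνc⟩
    exact ⟨⟨inf_le_left, hμc⟩, inf_le_right, hνc⟩

theorem card_covers_inter_covers (μ ν : YoungDiagram) :
    #(μ.covers ∩ ν.covers) = #(μ.cocovers ∩ ν.cocovers) + if μ = ν then 1 else 0 := by
  split_ifs with h
  · rw [h, inter_self, inter_self, card_covers_eq_card_cocovers_add_one]
  · have hsup_iff_inf : (μ ⊔ ν).card = μ.card + 1 ∧ (μ ⊔ ν).card = ν.card + 1 ↔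
        μ.card = (μ ⊓ ν).card + 1 ∧ ν.card = (μ ⊓ ν).card + 1 := by
      have := card_sup_add_card_inf μ ν
      omega
    rw [covers_inter_covers_of_ne h, cocovers_inter_cocovers_of_ne h, filter_singleton,
      filter_singleton, if_congr hsup_iff_inf rfl rfl, add_zero]
    split_ifs <;> rfl

@[simp]
theorem card_bot : (⊥ : YoungDiagram).card = 0 := by
  simp [YoungDiagram.card]

theorem cocovers_bot : (⊥ : YoungDiagram).cocovers = ∅ :=
  eq_empty_of_forall_notMem fun ν h => by simpa using (mem_cocovers.1 h).2

theorem bot_notMem_covers (μ : YoungDiagram) : ⊥ ∉ μ.covers := fun h => by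
  simpa using (mem_covers.1 h).2

noncomputable def up : (YoungDiagram →₀ ℕ) →ₗ[ℕ] YoungDiagram →₀ ℕ :=
  linearCombination ℕ fun μ => ∑ ν ∈ μ.covers, single ν 1

noncomputable def down : (YoungDiagram →₀ ℕ) →ₗ[ℕ] YoungDiagram →₀ ℕ :=
  linearCombination ℕ fun μ => ∑ ν ∈ μ.cocovers, single ν 1

theorem up_apply (x : YoungDiagram →₀ ℕ) (ν : YoungDiagram) :
    up x ν = ∑ μ ∈ ν.cocovers, x μ :=
  linearCombination_sum_single_one_apply (fun _ _ => mem_covers_iff_mem_cocovers) x ν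

theorem down_apply (x : YoungDiagram →₀ ℕ) (ν : YoungDiagram) :
    down x ν = ∑ μ ∈ ν.covers, x μ :=
  linearCombination_sum_single_one_apply (fun _ _ => mem_covers_iff_mem_cocovers.symm) x ν

theorem down_comp_up : down ∘ₗ up = up ∘ₗ down + LinearMap.id := by
  refine lhom_ext' fun μ => LinearMap.ext_ring (Finsupp.ext fun ν => ?_)
  have hdu : down (up (single μ 1)) ν = #(μ.covers ∩ ν.covers) := by
    simp only [down_apply, up_apply, single_apply, Finset.sum_ite_eq,
      ← mem_covers_iff_mem_cocovers, ← card_filter, filter_mem_eq_inter, inter_comm]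
  have hud : up (down (single μ 1)) ν = #(μ.cocovers ∩ ν.cocovers) := by
    simp only [up_apply, down_apply, single_apply, Finset.sum_ite_eq,
      mem_covers_iff_mem_cocovers, ← card_filter, filter_mem_eq_inter, inter_comm]
  simp [hdu, hud, card_covers_inter_covers, single_apply]

def neighbors (μ : YoungDiagram) : Finset YoungDiagram := μ.covers ∪ μ.cocovers

theorem mem_neighbors : ν ∈ μ.neighbors ↔
    (μ ≤ ν ∧ ν.card = μ.card + 1) ∨ (ν ≤ μ ∧ μ.card = ν.card + 1) := by
  rw [neighbors, mem_union, mem_covers, mem_cocovers]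

theorem mem_neighbors_comm : ν ∈ μ.neighbors ↔ μ ∈ ν.neighbors := by
  rw [mem_neighbors, mem_neighbors, or_comm]

theorem disjoint_covers_cocovers (μ : YoungDiagram) : Disjoint μ.covers μ.cocovers :=
  disjoint_left.2 fun _ h h' => by
    have := (mem_covers.1 h).2
    have := (mem_cocovers.1 h').2
    omega

noncomputable def walkCount : ℕ → YoungDiagram →₀ ℕ
  | 0 => single ⊥ 1
  | n + 1 => up (walkCount n) + down (walkCount n)

theorem walkCount_zero : walkCount 0 = single ⊥ 1 :=
  rfl

theorem walkCount_succ (n : ℕ) : walkCount (n + 1) = up (walkCount n) + down (walkCount n) :=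
  rfl

theorem walkCount_succ_apply (n : ℕ) (ν : YoungDiagram) :
    walkCount (n + 1) ν = ∑ μ ∈ ν.neighbors, walkCount n μ := by
  rw [walkCount_succ, Finsupp.add_apply, up_apply, down_apply, neighbors,
    sum_union (disjoint_covers_cocovers ν), add_comm]

theorem down_walkCount_zero : down (walkCount 0) = 0 := by
  ext ν
  simp [walkCount, down_apply, single_apply, bot_notMem_covers]

theorem down_walkCount_succ (n : ℕ) : down (walkCount (n + 1)) = (n + 1) • walkCount n := by
  have hdu := LinearMap.congr_fun down_comp_up
  simp only [LinearMap.comp_apply, LinearMap.add_apply, LinearMap.id_apply] at hdu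
  induction n with
  | zero => simp [walkCount_succ, hdu, down_walkCount_zero]
  | succ n ih =>
    rw [walkCount_succ (n + 1), map_add, hdu, ih, map_nsmul, map_nsmul, add_right_comm,
      ← smul_add, ← walkCount_succ, ← succ_nsmul]

theorem walkCount_add_two_bot (n : ℕ) : walkCount (n + 2) ⊥ = (n + 1) * walkCount n ⊥ := by
  rw [walkCount_succ, Finsupp.add_apply, up_apply, cocovers_bot, sum_empty, zero_add,
    down_walkCount_succ, Finsupp.smul_apply, smul_eq_mul]

theorem walkCount_two_mul_bot (m : ℕ) : walkCount (2 * m) ⊥ = (2 * m - 1)‼ := by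
  induction m with
  | zero => simp [walkCount]
  | succ m ih =>
    rw [mul_add, mul_one, walkCount_add_two_bot, ih, show 2 * m + 2 - 1 = 2 * m + 1 by omega,
      Nat.doubleFactorial_add_one]

theorem walkCount_two_mul_add_one_bot (m : ℕ) : walkCount (2 * m + 1) ⊥ = 0 := by
  induction m with
  | zero => simp [walkCount_succ, up_apply, cocovers_bot, down_walkCount_zero]
  | succ m ih => rw [show 2 * (m + 1) + 1 = 2 * m + 1 + 2 by ring, walkCount_add_two_bot, ih,
      mul_zero]

/-- `linearCombination ℕ y x = ∑ λ, x λ * y λ` is the standard pairing, for which `up` and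
`down` are adjoint. -/
theorem linearCombination_up (y x : YoungDiagram →₀ ℕ) :
    linearCombination ℕ y (up x) = linearCombination ℕ (down y) x := by
  have h : linearCombination ℕ ⇑y ∘ₗ up = linearCombination ℕ ⇑(down y) :=
    lhom_ext' fun μ => LinearMap.ext_ring (by simp [up, down_apply])
  exact LinearMap.congr_fun h x

theorem linearCombination_down (y x : YoungDiagram →₀ ℕ) :
    linearCombination ℕ y (down x) = linearCombination ℕ (up y) x := by
  have h : linearCombination ℕ ⇑y ∘ₗ down = linearCombination ℕ ⇑(up y) :=
    lhom_ext' fun μ => LinearMap.ext_ring (by simp [down, up_apply])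
  exact LinearMap.congr_fun h x

theorem linearCombination_walkCount (a b : ℕ) :
    linearCombination ℕ (walkCount a) (walkCount b) = walkCount (a + b) ⊥ := by
  induction b generalizing a with
  | zero => simp [walkCount]
  | succ b ih =>
    rw [walkCount_succ b, map_add, linearCombination_up, linearCombination_down,
      show a + (b + 1) = a + 1 + b by omega, ← ih, walkCount_succ a]
    simp only [linearCombination_apply, Finsupp.coe_add, Pi.add_apply, smul_add, Finsupp.sum_add,
      add_comm]

end YoungDiagram

open YoungDiagram

theorem isOscillatingTableau_succ_iff {n : ℕ} {f : Fin (n + 2) → YoungDiagram} :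
    IsOscillatingTableau (n + 1) f ↔ IsOscillatingTableau n (Fin.init f) ∧
      f (Fin.last (n + 1)) ∈ (f (Fin.last n).castSucc).neighbors := by
  simp only [IsOscillatingTableau, Fin.forall_fin_succ' (n := n), mem_neighbors, Fin.init,
    Fin.castSucc_zero, Fin.succ_castSucc, Fin.succ_last, and_assoc]

abbrev OscillatingTableauTo (n : ℕ) (ν : YoungDiagram) : Type :=
  {f : Fin (n + 1) → YoungDiagram // IsOscillatingTableau n f ∧ f (Fin.last n) = ν}

def OscillatingTableauTo.snocEquiv (n : ℕ) (ν : YoungDiagram) :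
    OscillatingTableauTo (n + 1) ν ≃ Σ μ : ν.neighbors, OscillatingTableauTo n μ where
  toFun f := ⟨⟨f.1 (Fin.last n).castSucc, by
      obtain ⟨f, hf, rfl⟩ := f
      exact mem_neighbors_comm.1 (isOscillatingTableau_succ_iff.1 hf).2⟩,
    ⟨Fin.init f.1, (isOscillatingTableau_succ_iff.1 f.2.1).1, rfl⟩⟩
  invFun g := ⟨Fin.snoc g.2.1 ν, isOscillatingTableau_succ_iff.2
      ⟨by simpa using g.2.2.1, by simpa [g.2.2.2] using mem_neighbors_comm.1 g.1.2⟩,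
    Fin.snoc_last _ _⟩
  left_inv := by
    rintro ⟨f, hf, rfl⟩
    exact Subtype.ext (Fin.snoc_init_self f)
  right_inv := by
    rintro ⟨⟨μ, hμ⟩, g, hg, hgμ⟩
    refine Sigma.subtype_ext (Subtype.ext ?_) (Fin.init_snoc (α := fun _ => YoungDiagram) ν g)
    exact (Fin.snoc_castSucc (α := fun _ => YoungDiagram) ν g _).trans hgμ

instance (ν : YoungDiagram) : Subsingleton (OscillatingTableauTo 0 ν) :=
  ⟨fun f g => Subtype.ext (funext fun i => by rw [Fin.fin_one_eq_zero i, f.2.1.1, g.2.1.1])⟩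

instance OscillatingTableauTo.finite (n : ℕ) (ν : YoungDiagram) :
    Finite (OscillatingTableauTo n ν) := by
  induction n generalizing ν with
  | zero => infer_instance
  | succ n ih => exact Finite.of_equiv _ (snocEquiv n ν).symm

theorem card_oscillatingTableauTo (n : ℕ) (ν : YoungDiagram) :
    Nat.card (OscillatingTableauTo n ν) = walkCount n ν := by
  induction n generalizing ν with
  | zero =>
    by_cases hν : ν = ⊥
    · rw [hν, walkCount_zero, single_eq_same]
      exact Nat.card_eq_one_iff_unique.2 ⟨inferInstance, ⟨⟨fun _ => ⊥, ⟨rfl, Fin.elim0⟩, rfl⟩⟩⟩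
    · rw [walkCount_zero, single_apply, if_neg (Ne.symm hν)]
      have : IsEmpty (OscillatingTableauTo 0 ν) := ⟨fun f => hν (f.2.2.symm.trans f.2.1.1)⟩
      exact Nat.card_of_isEmpty
  | succ n ih =>
    rw [Nat.card_congr (OscillatingTableauTo.snocEquiv n ν), Nat.card_sigma, walkCount_succ_apply,
      ← sum_coe_sort ν.neighbors]
    simp only [ih]

theorem walkCount_last_ne_zero {n : ℕ} {f : Fin (n + 1) → YoungDiagram}
    (hf : IsOscillatingTableau n f) : walkCount n (f (Fin.last n)) ≠ 0 := by
  have : Nonempty (OscillatingTableauTo n (f (Fin.last n))) := ⟨⟨f, hf, rfl⟩⟩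
  exact card_oscillatingTableauTo n _ ▸ Nat.card_pos.ne'

def oscillatingTableauPairsEquiv (n : ℕ) :
    {p : (Fin (n + 1) → YoungDiagram) × (Fin (n + 1) → YoungDiagram) //
        IsOscillatingTableau n p.1 ∧ IsOscillatingTableau n p.2 ∧
          p.1 (Fin.last n) = p.2 (Fin.last n)} ≃
      Σ ν : (walkCount n).support, OscillatingTableauTo n ν × OscillatingTableauTo n ν where
  toFun p := ⟨⟨p.1.1 (Fin.last n), Finsupp.mem_support_iff.2 (walkCount_last_ne_zero p.2.1)⟩,
    ⟨p.1.1, p.2.1, rfl⟩, ⟨p.1.2, p.2.2.1, p.2.2.2.symm⟩⟩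
  invFun q := ⟨(q.2.1.1, q.2.2.1), q.2.1.2.1, q.2.2.2.1, q.2.1.2.2.trans q.2.2.2.2.symm⟩
  left_inv _ := rfl
  right_inv := by
    rintro ⟨⟨ν, hν⟩, ⟨f, hf, hfν⟩, g, hg, hgν⟩
    obtain rfl : f (Fin.last n) = ν := hfν
    rfl

theorem card_oscillatingTableau_pairs (n : ℕ) :
    Nat.card {p : (Fin (n + 1) → YoungDiagram) × (Fin (n + 1) → YoungDiagram) //
        IsOscillatingTableau n p.1 ∧ IsOscillatingTableau n p.2 ∧
          p.1 (Fin.last n) = p.2 (Fin.last n)} = walkCount (2 * n) ⊥ := by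
  rw [Nat.card_congr (oscillatingTableauPairsEquiv n), Nat.card_sigma, two_mul,
    ← linearCombination_walkCount, linearCombination_apply, Finsupp.sum,
    ← sum_coe_sort (walkCount n).support]
  simp only [Nat.card_prod, card_oscillatingTableauTo, smul_eq_mul]

/-- The number of oscillating tableaux of length `n` ending at `∅` is `(n−1)‼` for even
`n` and `0` for odd `n`; moreover the sum over all diagrams `λ` of the squared number of
oscillating tableaux of length `n` ending at `λ` (i.e. the number of pairs of oscillating
tableaux with the same endpoint) is `(2n−1)‼ = dim BMW_n`. -/
theorem oscillating_tableaux_count (n : ℕ) :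
    (Even n →
      Nat.card {f : Fin (n + 1) → YoungDiagram //
        IsOscillatingTableau n f ∧ f (Fin.last n) = ⊥} = (n - 1)‼) ∧
    (Odd n →
      Nat.card {f : Fin (n + 1) → YoungDiagram //
        IsOscillatingTableau n f ∧ f (Fin.last n) = ⊥} = 0) ∧
    Nat.card {p : (Fin (n + 1) → YoungDiagram) × (Fin (n + 1) → YoungDiagram) //
        IsOscillatingTableau n p.1 ∧ IsOscillatingTableau n p.2 ∧
          p.1 (Fin.last n) = p.2 (Fin.last n)} = (2 * n - 1)‼ := by
  refine ⟨fun ⟨m, hm⟩ => ?_, fun ⟨m, hm⟩ => ?_, ?_⟩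
  · obtain rfl : n = 2 * m := by omega
    exact (card_oscillatingTableauTo _ ⊥).trans (walkCount_two_mul_bot m)
  · subst hm
    exact (card_oscillatingTableauTo _ ⊥).trans (walkCount_two_mul_add_one_bot m)
  · exact (card_oscillatingTableau_pairs n).trans (walkCount_two_mul_bot n)
end
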